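/- arXiv:2307.05992 — 5 statements merged into one kernel-verified Lean document; each statement's English description precedes it below -/
import Mathlib

section
/- Let A, L, δ_L, c be real numbers with A > 0, L > 0, c > 0 and -L < δ_L < 0. Assume the three conditions: (1) 3L + δ_L < A; (2) -L ≤ δ_L < -L²/A; (3) A/(A - 2L - δ_L) < c < A/L. If δ_A is a real number with A + δ_A ≠ 0 satisfying the withdrawal equation δ_A - c(L + δ_L)²/(A + δ_A) + cL²/A = (1 - c)·δ_L, then either δ_A > 0, or δ_A < 0 and |δ_A| > A. -/
/-!
Clearing denominators turns the withdrawal equation into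
`(A + δA) * (A * δA + q) + c * (L + δL) ^ 2 * δA = 0` with `q = δL * (c * (A - 2L - δL) - A)`,
and the first half of condition (3) makes `q` negative. For `-A < δA ≤ 0` every term on the
left is then `≤ 0` and the first one is `< 0`, so no root lies in `(-A, 0]`.
-/

theorem withdrawal_equation_cleared {A L δL c x : ℝ} (hA : A ≠ 0) (hx : A + x ≠ 0)
    (h : x - c * (L + δL) ^ 2 / (A + x) + c * L ^ 2 / A = (1 - c) * δL) :
    (A + x) * (A * x + δL * (c * (A - 2 * L - δL) - A)) + c * (L + δL) ^ 2 * x = 0 := by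
  field_simp at h
  linear_combination h

theorem lt_neg_of_nonpos_of_root {A q P x : ℝ} (hA : 0 ≤ A) (hq : q < 0) (hP : 0 ≤ P)
    (hx : A + x ≠ 0) (hroot : (A + x) * (A * x + q) + P * x = 0) (hx0 : x ≤ 0) :
    x < -A := by
  by_contra! hge
  have hpos : 0 < A + x := lt_of_le_of_ne (by linarith) (Ne.symm hx)
  have hlin : A * x + q < 0 := by linarith [mul_nonpos_of_nonneg_of_nonpos hA hx0]
  linarith [mul_neg_of_pos_of_neg hpos hlin, mul_nonpos_of_nonneg_of_nonpos hP hx0]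

theorem robbed_withdrawal_general (A L δL c δA : ℝ)
    (hA : 0 < A) (hL : 0 < L)
    (hδL_neg : δL < 0)
    (cond1 : 3 * L + δL < A)
    (cond3 : A / (A - 2 * L - δL) < c ∧ c < A / L)
    (hne : A + δA ≠ 0)
    (heq : δA - c * (L + δL) ^ 2 / (A + δA) + c * L ^ 2 / A = (1 - c) * δL) :
    δA > 0 ∨ (δA < 0 ∧ |δA| > A) := by
  have hD : 0 < A - 2 * L - δL := by linarith
  have hc : 0 < c := (div_pos hA hD).trans cond3.1
  have hq : δL * (c * (A - 2 * L - δL) - A) < 0 :=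
    mul_neg_of_neg_of_pos hδL_neg (sub_pos.2 ((div_lt_iff₀ hD).1 cond3.1))
  rcases lt_or_ge 0 δA with hpos | hnonpos
  · exact Or.inl hpos
  · have hlt : δA < -A := lt_neg_of_nonpos_of_root hA.le hq (by positivity) hne
      (withdrawal_equation_cleared hA.ne' hne heq) hnonpos
    exact Or.inr ⟨by linarith, by rw [abs_of_neg (by linarith)]; linarith⟩

/-- Theorem 1 (Robbed withdrawal): under the three conditions, any solution `δA` of the
withdrawal equation is either positive, or negative with `|δA| > A`. -/
theorem robbed_withdrawal (A L δL c δA : ℝ)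
    (hA : 0 < A) (hL : 0 < L) (hc : 0 < c)
    (hδL_lower : -L < δL) (hδL_neg : δL < 0)
    (cond1 : 3 * L + δL < A)
    (cond2 : -L ≤ δL ∧ δL < -L ^ 2 / A)
    (cond3 : A / (A - 2 * L - δL) < c ∧ c < A / L)
    (hne : A + δA ≠ 0)
    (heq : δA - c * (L + δL) ^ 2 / (A + δA) + c * L ^ 2 / A = (1 - c) * δL) :
    δA > 0 ∨ (δA < 0 ∧ |δA| > A) :=
  robbed_withdrawal_general A L δL c δA hA hL hδL_neg cond1 cond3 hne heq
end

section
/- Let A, L, δ_L, c be real numbers with A > 0, L > 0, -L < δ_L < 0, satisfying: (1) 3L + δ_L < A; (2) δ_L < -L²/A; (3) A/(A - 2L - δ_L) < c < A/L. Then the quantity b = (δ_L + L²/A)·c + A - δ_L satisfies 2L < b < 2A. -/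
/-!
As a function of `c`, `b = (δL + L²/A) c + A - δL` is affine with slope `δL + L²/A`, which is
negative by (2), so on the interval (3) it lies strictly between its values at the endpoints.
At `c = A/L` it equals `2L + (A - L)(L + δL)/L ≥ 2L`; at `c = A/(A - 2L - δL)` it equals
`2A - (A(A - 2L - δL) - (L + δL)²)/(A - 2L - δL) ≤ 2A`, because (1) gives
`(L + δL)² < L² < AL < A(A - 2L - δL)`.
-/

section

variable {A L δL : ℝ}

lemma middleCoeff_at_A_div_L (hA : A ≠ 0) (hL : L ≠ 0) :
    (δL + L ^ 2 / A) * (A / L) + A - δL = 2 * L + (A - L) * (L + δL) / L := by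
  field_simp
  ring

lemma middleCoeff_at_A_div_sub (hA : A ≠ 0) (hD : A - 2 * L - δL ≠ 0) :
    (δL + L ^ 2 / A) * (A / (A - 2 * L - δL)) + A - δL
      = 2 * A - (A * (A - 2 * L - δL) - (L + δL) ^ 2) / (A - 2 * L - δL) := by
  -- `field_simp` rewrites `2 * L` to `L * 2` and would then no longer see `hD`
  rw [mul_comm 2 L] at hD ⊢
  field_simp
  ring

lemma sq_add_lt_mul_sub (h_lower : -L < δL) (h_neg : δL < 0) (h : 3 * L + δL < A) :
    (L + δL) ^ 2 < A * (A - 2 * L - δL) := by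
  have hsq : (L + δL) ^ 2 < L ^ 2 := pow_lt_pow_left₀ (by linarith) (by linarith) two_ne_zero
  nlinarith

end

/-- The Claim inside the proof of Theorem 1: `2L < b < 2A`. -/
theorem claim_b_bounds (A L δL c : ℝ)
    (hA : 0 < A) (hL : 0 < L)
    (hδL_lower : -L < δL) (hδL_neg : δL < 0)
    (cond1 : 3 * L + δL < A)
    (cond2 : δL < -L ^ 2 / A)
    (cond3 : A / (A - 2 * L - δL) < c ∧ c < A / L) :
    2 * L < (δL + L ^ 2 / A) * c + A - δL ∧ (δL + L ^ 2 / A) * c + A - δL < 2 * A := by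
  obtain ⟨hc_lower, hc_upper⟩ := cond3
  have hslope : δL + L ^ 2 / A < 0 := by linarith [neg_div A (L ^ 2)]
  have hD : 0 < A - 2 * L - δL := by linarith
  constructor
  · calc 2 * L ≤ 2 * L + (A - L) * (L + δL) / L :=
          le_add_of_nonneg_right (div_nonneg (mul_nonneg (by linarith) (by linarith)) hL.le)
      _ = (δL + L ^ 2 / A) * (A / L) + A - δL := (middleCoeff_at_A_div_L hA.ne' hL.ne').symm
      _ < (δL + L ^ 2 / A) * c + A - δL := by linarith [mul_lt_mul_of_neg_left hc_upper hslope]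
  · have hgap := sq_add_lt_mul_sub hδL_lower hδL_neg cond1
    calc (δL + L ^ 2 / A) * c + A - δL
          < (δL + L ^ 2 / A) * (A / (A - 2 * L - δL)) + A - δL := by
            linarith [mul_lt_mul_of_neg_left hc_lower hslope]
      _ = 2 * A - (A * (A - 2 * L - δL) - (L + δL) ^ 2) / (A - 2 * L - δL) :=
          middleCoeff_at_A_div_sub hA.ne' hD.ne'
      _ ≤ 2 * A := sub_le_self _ (div_nonneg (by linarith) hD.le)
end

section
/- Let A, L, δ_L, c be real numbers with A > 0, L > 0, δ_L < 0, A - 2L - δ_L > 0, and suppose b = (δ_L + L²/A)·c + A - δ_L satisfies b > 0. Set Δ = b² - 4·((A - 2L - δ_L)·c - A)·δ_L. Then the root δ_A⁺ = (-b + √Δ)/2 is strictly positive if and only if c > A/(A - 2L - δ_L). -/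
theorem neg_add_sqrt_sq_add_pos_iff {b e : ℝ} (hb : 0 ≤ b) :
    0 < -b + √(b ^ 2 + e) ↔ 0 < e := by
  rw [neg_add_eq_sub, sub_pos, Real.lt_sqrt hb, lt_add_iff_pos_right]

theorem plus_root_pos_iff_general (A L δL c : ℝ)
    (hδL : δL < 0)
    (hden : A - 2 * L - δL > 0)
    (hb : (δL + L ^ 2 / A) * c + A - δL > 0) :
    (-((δL + L ^ 2 / A) * c + A - δL)
        + Real.sqrt (((δL + L ^ 2 / A) * c + A - δL) ^ 2
            - 4 * (((A - 2 * L - δL) * c - A) * δL))) / 2 > 0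
      ↔ c > A / (A - 2 * L - δL) := by
  set b := (δL + L ^ 2 / A) * c + A - δL
  have hΔ : b ^ 2 - 4 * (((A - 2 * L - δL) * c - A) * δL)
      = b ^ 2 + -4 * δL * ((A - 2 * L - δL) * c - A) := by ring
  rw [hΔ, gt_iff_lt, div_pos_iff_of_pos_right two_pos, neg_add_sqrt_sq_add_pos_iff hb.le,
    mul_pos_iff_of_pos_left (by linarith), sub_pos, gt_iff_lt, div_lt_iff₀' hden]

/-- The larger root `δA⁺ = (-b + √Δ)/2` is positive iff `c > A/(A - 2L - δL)`. -/
theorem plus_root_pos_iff (A L δL c : ℝ)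
    (hA : 0 < A) (hL : 0 < L) (hδL : δL < 0)
    (hden : A - 2 * L - δL > 0)
    (hb : (δL + L ^ 2 / A) * c + A - δL > 0) :
    (-((δL + L ^ 2 / A) * c + A - δL)
        + Real.sqrt (((δL + L ^ 2 / A) * c + A - δL) ^ 2
            - 4 * (((A - 2 * L - δL) * c - A) * δL))) / 2 > 0
      ↔ c > A / (A - 2 * L - δL) :=
  plus_root_pos_iff_general A L δL c hδL hden hb
end

section
/- Let A, L, δ_L, c be real numbers with A > 0, L > 0, c > 0, -L < δ_L < 0, satisfying: (1) 3L + δ_L < A; (2) δ_L < -L²/A; (3) A/(A - 2L - δ_L) < c < A/L. Set b = (δ_L + L²/A)·c + A - δ_L and Δ = b² - 4·((A - 2L - δ_L)·c - A)·δ_L. Then the root δ_A⁻ = (-b - √Δ)/2 satisfies δ_A⁻ < 0 and |δ_A⁻| > A. -/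
/-! The withdrawal quadratic `q(x) = x² + b x + C` takes the value `q(-A) = -c (L + δL)² < 0`, so
`-A` lies strictly between the two roots of the monic quadratic `q`, and the smaller root lies
below `-A < 0`. -/

theorem Real.neg_root_lt_of_quadratic_neg {b C x : ℝ} (h : x ^ 2 + b * x + C < 0) :
    (-b - √(b ^ 2 - 4 * C)) / 2 < x := by
  have hsq : (2 * x + b) ^ 2 < b ^ 2 - 4 * C := by linear_combination 4 * h
  linarith [Real.neg_sqrt_lt_of_sq_lt hsq]

theorem withdrawal_quadratic_eval_neg (A L δL c : ℝ) (hA : A ≠ 0) :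
    (-A) ^ 2 + ((δL + L ^ 2 / A) * c + A - δL) * -A + ((A - 2 * L - δL) * c - A) * δL
      = -(c * (L + δL) ^ 2) := by
  field_simp
  ring

theorem minus_root_bad_debt_general (A L δL c : ℝ)
    (hA : 0 < A) (hc : 0 < c)
    (hδL_lower : -L < δL) :
    (-((δL + L ^ 2 / A) * c + A - δL)
        - Real.sqrt (((δL + L ^ 2 / A) * c + A - δL) ^ 2
            - 4 * (((A - 2 * L - δL) * c - A) * δL))) / 2 < 0 ∧
      |(-((δL + L ^ 2 / A) * c + A - δL)
          - Real.sqrt (((δL + L ^ 2 / A) * c + A - δL) ^ 2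
              - 4 * (((A - 2 * L - δL) * c - A) * δL))) / 2| > A := by
  have hroot_lt := Real.neg_root_lt_of_quadratic_neg (x := -A) <| by
    rw [withdrawal_quadratic_eval_neg A L δL c hA.ne']
    have : 0 < L + δL := by linarith
    exact neg_neg_of_pos (by positivity)
  have hneg := hroot_lt.trans (neg_lt_zero.2 hA)
  refine ⟨hneg, ?_⟩
  rw [abs_of_neg hneg]
  linarith

/-- The smaller root `δA⁻ = (-b - √Δ)/2` is negative and exceeds `A` in absolute value. -/
theorem minus_root_bad_debt (A L δL c : ℝ)
    (hA : 0 < A) (hL : 0 < L) (hc : 0 < c)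
    (hδL_lower : -L < δL) (hδL_neg : δL < 0)
    (cond1 : 3 * L + δL < A)
    (cond2 : δL < -L ^ 2 / A)
    (cond3 : A / (A - 2 * L - δL) < c ∧ c < A / L) :
    (-((δL + L ^ 2 / A) * c + A - δL)
        - Real.sqrt (((δL + L ^ 2 / A) * c + A - δL) ^ 2
            - 4 * (((A - 2 * L - δL) * c - A) * δL))) / 2 < 0 ∧
      |(-((δL + L ^ 2 / A) * c + A - δL)
          - Real.sqrt (((δL + L ^ 2 / A) * c + A - δL) ^ 2
              - 4 * (((A - 2 * L - δL) * c - A) * δL))) / 2| > A :=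
  minus_root_bad_debt_general A L δL c hA hc hδL_lower
end

section
/- Let A, L, δ_L, c be real numbers with A > 0, set b = (δ_L + L²/A)·c + A - δ_L and Δ = b² - 4·((A - 2L - δ_L)·c - A)·δ_L, and assume Δ ≥ 0. If δ = (-b + √Δ)/2 or δ = (-b - √Δ)/2, and A + δ ≠ 0, then δ satisfies δ - c(L + δ_L)²/(A + δ) + cL²/A = (1 - c)·δ_L. -/
theorem quadratic_eq_zero_of_eq_quadratic_formula {b c x : ℝ} (hΔ : 0 ≤ b ^ 2 - 4 * c)
    (hx : x = (-b + √(b ^ 2 - 4 * c)) / 2 ∨ x = (-b - √(b ^ 2 - 4 * c)) / 2) :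
    x ^ 2 + b * x + c = 0 := by
  have hdiscrim : discrim 1 b c = √(b ^ 2 - 4 * c) * √(b ^ 2 - 4 * c) := by
    rw [Real.mul_self_sqrt hΔ, discrim, mul_one]
  have := (quadratic_eq_zero_iff one_ne_zero hdiscrim x).2 (by simpa using hx)
  linear_combination this

theorem withdrawal_eq_iff_quadratic_eq_zero {A L δL c δ : ℝ} (hA : A ≠ 0) (hne : A + δ ≠ 0) :
    δ - c * (L + δL) ^ 2 / (A + δ) + c * L ^ 2 / A = (1 - c) * δL ↔
      δ ^ 2 + ((δL + L ^ 2 / A) * c + A - δL) * δ + ((A - 2 * L - δL) * c - A) * δL = 0 := by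
  have hcleared : δ - c * (L + δL) ^ 2 / (A + δ) + c * L ^ 2 / A - (1 - c) * δL
      = (δ ^ 2 + ((δL + L ^ 2 / A) * c + A - δL) * δ + ((A - 2 * L - δL) * c - A) * δL)
        / (A + δ) := by
    field_simp
    ring
  rw [← sub_eq_zero, hcleared, div_eq_zero_iff, or_iff_left hne]

/-- Both `(-b ± √Δ)/2` solve the withdrawal equation when `Δ ≥ 0` and `A + δ ≠ 0`. -/
theorem roots_solve_withdrawal (A L δL c δ : ℝ) (hA : 0 < A)
    (hΔ : ((δL + L ^ 2 / A) * c + A - δL) ^ 2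
        - 4 * (((A - 2 * L - δL) * c - A) * δL) ≥ 0)
    (hδ : δ = (-((δL + L ^ 2 / A) * c + A - δL)
          + Real.sqrt (((δL + L ^ 2 / A) * c + A - δL) ^ 2
              - 4 * (((A - 2 * L - δL) * c - A) * δL))) / 2
      ∨ δ = (-((δL + L ^ 2 / A) * c + A - δL)
          - Real.sqrt (((δL + L ^ 2 / A) * c + A - δL) ^ 2
              - 4 * (((A - 2 * L - δL) * c - A) * δL))) / 2)
    (hne : A + δ ≠ 0) :
    δ - c * (L + δL) ^ 2 / (A + δ) + c * L ^ 2 / A = (1 - c) * δL :=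
  (withdrawal_eq_iff_quadratic_eq_zero hA.ne' hne).2
    (quadratic_eq_zero_of_eq_quadratic_formula hΔ hδ)
end
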